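/- arXiv:1306.2191 — 3 statements merged into one kernel-verified Lean document; each statement's English description precedes it below -/
import Mathlib

section
/- Let F : D(F) ⊂ X → Y satisfy: (i) for x, z in a convex set B ⊂ D(F), the directional derivative lim_{t↘0} (F(x + t(z−x)) − F(x))/t = F'(x)(z − x) exists with F'(x) a bounded linear operator; (ii) ‖(F'(z) − F'(x))w‖ ≤ K₀‖z − x‖‖F'(x)w‖ + K₁‖F'(x)(z − x)‖‖w‖ for all w ∈ X and x, z ∈ B. Then for all x, z ∈ B: ‖F(z) − F(x) − F'(x)(z − x)‖ ≤ (1/2)(K₀ + K₁)‖z − x‖‖F'(x)(z − x)‖. -/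
/-- Taylor remainder estimate under the structural nonlinearity condition
(Assumption 1 (b) and (d)). -/
theorem taylor_remainder_estimate
    {X Y : Type*} [NormedAddCommGroup X] [NormedSpace ℝ X]
    [NormedAddCommGroup Y] [NormedSpace ℝ Y] [CompleteSpace Y]
    (F : X → Y) (F' : X → X →L[ℝ] Y) (B : Set X) (hB : Convex ℝ B)
    (K₀ K₁ : ℝ) (hK₀ : 0 ≤ K₀) (hK₁ : 0 ≤ K₁)
    (hder : ∀ x ∈ B, ∀ z ∈ B, ∀ t ∈ Set.Icc (0:ℝ) 1,
      HasDerivWithinAt (fun s : ℝ => F (x + s • (z - x)))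
        (F' (x + t • (z - x)) (z - x)) (Set.Icc (0:ℝ) 1) t)
    (hstruct : ∀ (w : X), ∀ x ∈ B, ∀ z ∈ B,
      ‖(F' z - F' x) w‖ ≤ K₀ * ‖z - x‖ * ‖F' x w‖ + K₁ * ‖F' x (z - x)‖ * ‖w‖) :
    ∀ x ∈ B, ∀ z ∈ B,
      ‖F z - F x - F' x (z - x)‖
        ≤ (1 / 2) * (K₀ + K₁) * ‖z - x‖ * ‖F' x (z - x)‖ := by
  intro x hx z hz
  set C : ℝ := (K₀ + K₁) * ‖z - x‖ * ‖F' x (z - x)‖ with hC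
  set g : ℝ → Y := fun t => F (x + t • (z - x)) - F x - t • (F' x (z - x)) with hg
  set g' : ℝ → Y := fun t => F' (x + t • (z - x)) (z - x) - F' x (z - x) with hg'
  have hderiv : ∀ t ∈ Set.Icc (0:ℝ) 1,
      HasDerivWithinAt g (g' t) (Set.Icc (0:ℝ) 1) t := by
    intro t ht
    exact ((hder x hx z hz t ht).sub_const (F x)).sub
      ((hasDerivWithinAt_id t _).smul_const (F' x (z - x)) |>.congr_deriv (by simp))
  have hderiv' : ∀ t ∈ Set.Ico (0:ℝ) 1,
      HasDerivWithinAt g (g' t) (Set.Ici t) t := by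
    intro t ht
    exact (hderiv t (Set.mem_Icc_of_Ico ht)).mono_of_mem_nhdsWithin
      (Icc_mem_nhdsGE_of_mem ht)
  have hmem : ∀ t ∈ Set.Icc (0:ℝ) 1, x + t • (z - x) ∈ B := by
    intro t ht
    have := hB hx hz (by linarith [ht.2] : (0:ℝ) ≤ 1 - t) ht.1 (by ring)
    convert this using 1
    module
  have bound : ∀ t ∈ Set.Ico (0:ℝ) 1, ‖g' t‖ ≤ C * t := by
    intro t ht
    have hmemt := hmem t ⟨ht.1, ht.2.le⟩
    have h := hstruct (z - x) x hx (x + t • (z - x)) hmemt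
    simp only [ContinuousLinearMap.sub_apply] at h
    have h1 : x + t • (z - x) - x = t • (z - x) := by abel
    rw [h1] at h
    have h2 : ‖t • (z - x)‖ = t * ‖z - x‖ := by
      rw [norm_smul, Real.norm_eq_abs, abs_of_nonneg ht.1]
    have h3 : (F' x) (t • (z - x)) = t • (F' x (z - x)) := by
      simp [map_smul]
    rw [h2, h3, norm_smul, Real.norm_eq_abs, abs_of_nonneg ht.1] at h
    calc ‖g' t‖ ≤ K₀ * (t * ‖z - x‖) * ‖F' x (z - x)‖ +
          K₁ * (t * ‖F' x (z - x)‖) * ‖z - x‖ := h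
      _ = C * t := by rw [hC]; ring
  have hcont : ContinuousOn g (Set.Icc (0:ℝ) 1) := fun t ht =>
    (hderiv t ht).continuousWithinAt
  have hBd : ∀ t : ℝ, HasDerivAt (fun s : ℝ => C / 2 * s ^ 2) (C * t) t := by
    intro t
    have := (hasDerivAt_pow 2 t).const_mul (C / 2)
    refine this.congr_deriv ?_
    ring
  have key := image_norm_le_of_norm_deriv_right_le_deriv_boundary hcont hderiv'
    (B := fun s : ℝ => C / 2 * s ^ 2) (by simp [hg]) hBd bound
    (Set.mem_Icc.2 ⟨zero_le_one, le_refl 1⟩)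
  simp only [hg, one_smul, one_pow, mul_one] at key
  calc ‖F z - F x - F' x (z - x)‖
      = ‖F (x + (z - x)) - F x - F' x (z - x)‖ := by rw [add_sub_cancel]
    _ ≤ C / 2 := key
    _ = (1 / 2) * (K₀ + K₁) * ‖z - x‖ * ‖F' x (z - x)‖ := by rw [hC]; ring
end

section
/- Under the same hypotheses as the Taylor remainder estimate (structural condition ‖(F'(z) − F'(x))w‖ ≤ K₀‖z−x‖‖F'(x)w‖ + K₁‖F'(x)(z−x)‖‖w‖ on a convex set B), for all x, z ∈ B: ‖F(z) − F(x) − F'(z)(z − x)‖ ≤ (3/2)(K₀ + K₁)‖z − x‖‖F'(x)(z − x)‖. -/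
/-- Taylor remainder estimate under the structural nonlinearity condition
(Assumption 1 (b) and (d)). -/
theorem taylor_remainder_estimate_at_endpoint
    {X Y : Type*} [NormedAddCommGroup X] [NormedSpace ℝ X]
    [NormedAddCommGroup Y] [NormedSpace ℝ Y] [CompleteSpace Y]
    (F : X → Y) (F' : X → X →L[ℝ] Y) (B : Set X) (hB : Convex ℝ B)
    (K₀ K₁ : ℝ) (hK₀ : 0 ≤ K₀) (hK₁ : 0 ≤ K₁)
    (hder : ∀ x ∈ B, ∀ z ∈ B, ∀ t ∈ Set.Icc (0:ℝ) 1,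
      HasDerivWithinAt (fun s : ℝ => F (x + s • (z - x)))
        (F' (x + t • (z - x)) (z - x)) (Set.Icc (0:ℝ) 1) t)
    (hstruct : ∀ (w : X), ∀ x ∈ B, ∀ z ∈ B,
      ‖(F' z - F' x) w‖ ≤ K₀ * ‖z - x‖ * ‖F' x w‖ + K₁ * ‖F' x (z - x)‖ * ‖w‖) :
    ∀ x ∈ B, ∀ z ∈ B,
      ‖F z - F x - F' z (z - x)‖
        ≤ (3 / 2) * (K₀ + K₁) * ‖z - x‖ * ‖F' x (z - x)‖ := by
  intro x hx z hz
  set N := ‖F' x (z - x)‖ with hN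
  set M := (K₀ + K₁) * ‖z - x‖ * N with hM
  have hN0 : 0 ≤ N := norm_nonneg _
  have hzx0 : 0 ≤ ‖z - x‖ := norm_nonneg _
  have hM0 : 0 ≤ M := by positivity
  -- membership of points on the segment
  have hmem : ∀ t ∈ Set.Icc (0:ℝ) 1, x + t • (z - x) ∈ B := by
    intro t ht
    have h := hB hx hz (by linarith [ht.2] : (0:ℝ) ≤ 1 - t) ht.1 (by ring)
    convert h using 1
    simp [smul_sub, sub_smul]
    abel
  -- the auxiliary function g
  set g : ℝ → Y := fun s => F (x + s • (z - x)) - F x - s • (F' x (z - x)) with hg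
  have hg' : ∀ t ∈ Set.Icc (0:ℝ) 1,
      HasDerivWithinAt g (F' (x + t • (z - x)) (z - x) - F' x (z - x))
        (Set.Icc (0:ℝ) 1) t := by
    intro t ht
    have h1 := (hder x hx z hz t ht).sub_const (F x)
    have h2 : HasDerivWithinAt (fun s : ℝ => s • (F' x (z - x)))
        (F' x (z - x)) (Set.Icc (0:ℝ) 1) t := by
      simpa using (hasDerivWithinAt_id t (Set.Icc (0:ℝ) 1)).smul_const (F' x (z - x))
    exact h1.sub h2
  -- derivative bound: ‖g' t‖ ≤ M * t
  have hbound : ∀ t ∈ Set.Icc (0:ℝ) 1,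
      ‖F' (x + t • (z - x)) (z - x) - F' x (z - x)‖ ≤ M * t := by
    intro t ht
    have hmemt := hmem t ht
    have h := hstruct (z - x) x hx (x + t • (z - x)) hmemt
    have e1 : x + t • (z - x) - x = t • (z - x) := by abel
    rw [e1] at h
    have e2 : ‖t • (z - x)‖ = t * ‖z - x‖ := by
      rw [norm_smul, Real.norm_eq_abs, abs_of_nonneg ht.1]
    have e3 : ‖F' x (t • (z - x))‖ = t * N := by
      rw [map_smul, norm_smul, Real.norm_eq_abs, abs_of_nonneg ht.1]
    rw [e2, e3] at h
    have e4 : (F' (x + t • (z - x)) - F' x) (z - x)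
        = F' (x + t • (z - x)) (z - x) - F' x (z - x) := rfl
    rw [e4] at h
    calc ‖F' (x + t • (z - x)) (z - x) - F' x (z - x)‖
        ≤ K₀ * (t * ‖z - x‖) * N + K₁ * (t * N) * ‖z - x‖ := h
      _ = M * t := by rw [hM]; ring
  -- continuity of g
  have hgc : ContinuousOn g (Set.Icc (0:ℝ) 1) := fun t ht =>
    (hg' t ht).continuousWithinAt
  -- boundary function
  set Bf : ℝ → ℝ := fun t => M / 2 * t ^ 2 with hBf
  have hBc : ContinuousOn Bf (Set.Icc (0:ℝ) 1) := by
    apply Continuous.continuousOn; fun_prop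
  have hBd : ∀ t ∈ Set.Ico (0:ℝ) 1, HasDerivWithinAt Bf (M * t) (Set.Ici t) t := by
    intro t _
    have : HasDerivAt Bf (M / 2 * (2 * t ^ 1)) t := (hasDerivAt_pow 2 t).const_mul (M / 2)
    have := this.hasDerivWithinAt (s := Set.Ici t)
    rw [show M * t = M / 2 * (2 * t ^ 1) by ring]; exact this
  have key := image_norm_le_of_norm_deriv_right_le_deriv_boundary' hgc
    (f' := fun t => F' (x + t • (z - x)) (z - x) - F' x (z - x))
    (fun t ht => (hg' t (Set.mem_Icc_of_Ico ht)).mono_of_mem_nhdsWithin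
      (Icc_mem_nhdsGE_of_mem ht))
    (by simp [hg, hBf]) hBc hBd
    (fun t ht => hbound t (Set.mem_Icc_of_Ico ht))
    (Set.right_mem_Icc.2 zero_le_one)
  have hg1 : ‖F z - F x - F' x (z - x)‖ ≤ M / 2 := by
    have e : x + (1:ℝ) • (z - x) = z := by simp
    simpa [hg, hBf, e] using key
  -- endpoint derivative difference
  have hend : ‖F' z (z - x) - F' x (z - x)‖ ≤ M := by
    have h := hstruct (z - x) x hx z hz
    have e4 : (F' z - F' x) (z - x) = F' z (z - x) - F' x (z - x) := rfl
    rw [e4] at h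
    calc ‖F' z (z - x) - F' x (z - x)‖
        ≤ K₀ * ‖z - x‖ * N + K₁ * N * ‖z - x‖ := h
      _ = M := by rw [hM]; ring
  have split : F z - F x - F' z (z - x)
      = (F z - F x - F' x (z - x)) - (F' z (z - x) - F' x (z - x)) := by abel
  calc ‖F z - F x - F' z (z - x)‖
      ≤ ‖F z - F x - F' x (z - x)‖ + ‖F' z (z - x) - F' x (z - x)‖ := by
        rw [split]; exact norm_sub_le _ _
    _ ≤ M / 2 + M := add_le_add hg1 hend
    _ = (3 / 2) * (K₀ + K₁) * ‖z - x‖ * N := by rw [hM]; ring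
end

section
/- Let X be a Banach space, T : X → Y bounded linear with ‖T‖ ≤ α₀^{1/p}/γ, and suppose Θ_F is p-convex (‖z−x‖ ≤ γ[D_ξΘ_F(z,x)]^{1/p}) and D_{ξ†}Θ_F(x₀, x†) ≤ (β ‖T(x₀−x†)‖^ν)^{p/(p−1+ν)}. Then ‖T(x₀ − x†)‖ ≤ (β α₀^{(p−1+ν)/p})^{1/(p−1)}. -/
open NormedSpace

/-- `ξ` is a subgradient of `Θ` at `x`. -/
def IsSubgradient {X : Type*} [NormedAddCommGroup X] [NormedSpace ℝ X]
    (Θ : X → ℝ) (x : X) (ξ : StrongDual ℝ X) : Prop :=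
  ∀ z : X, Θ x + ξ (z - x) ≤ Θ z

/-- The Bregman distance `D_ξΘ(z, x) = Θ(z) − Θ(x) − ⟨ξ, z − x⟩`. -/
def bregman {X : Type*} [NormedAddCommGroup X] [NormedSpace ℝ X]
    (Θ : X → ℝ) (ξ : StrongDual ℝ X) (z x : X) : ℝ :=
  Θ z - Θ x - ξ (z - x)

/-- The scaling condition `‖T‖ ≤ α₀^(1/p)/γ` together with the `p`-convexity
and the initial Bregman distance bound yields the bound on `‖T(x₀ − x†)‖`. -/
theorem initial_residual_bound
    {X Y : Type*} [NormedAddCommGroup X] [NormedSpace ℝ X]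
    [NormedAddCommGroup Y] [NormedSpace ℝ Y]
    (ΘF : X → ℝ) (T : X →L[ℝ] Y)
    (p γ α₀ ν β : ℝ) (hp : 2 ≤ p) (hγ : 0 < γ) (hα₀ : 0 < α₀)
    (hν0 : 0 < ν) (hν1 : ν ≤ 1) (hβ : 0 ≤ β)
    (hT : ‖T‖ ≤ α₀ ^ (1 / p) / γ)
    (hpconv : ∀ (z x : X) (ξ : StrongDual ℝ X), IsSubgradient ΘF x ξ →
      ‖z - x‖ ≤ γ * (bregman ΘF ξ z x) ^ (1 / p))
    (xdag x₀ : X) (ξdag : StrongDual ℝ X) (hξdag : IsSubgradient ΘF xdag ξdag)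
    (hD : bregman ΘF ξdag x₀ xdag
      ≤ (β * ‖T (x₀ - xdag)‖ ^ ν) ^ (p / (p - 1 + ν))) :
    ‖T (x₀ - xdag)‖ ≤ (β * α₀ ^ ((p - 1 + ν) / p)) ^ (1 / (p - 1)) := by
  set r := ‖T (x₀ - xdag)‖ with hr
  have hr0 : 0 ≤ r := norm_nonneg _
  have hp1 : (0:ℝ) < p - 1 := by linarith
  have hq : (0:ℝ) < p - 1 + ν := by linarith
  have hp0 : (0:ℝ) < p := by linarith
  rcases eq_or_lt_of_le hr0 with h0 | h0
  · rw [← h0]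
    positivity
  · have hD0 : 0 ≤ bregman ΘF ξdag x₀ xdag := by
      have := hξdag x₀
      simp only [bregman]
      linarith
    have hbr : 0 ≤ β * r ^ ν := by positivity
    have h1 : ‖x₀ - xdag‖ ≤ γ * (β * r ^ ν) ^ (1 / (p - 1 + ν)) := by
      have h3 : (bregman ΘF ξdag x₀ xdag) ^ (1/p)
          ≤ ((β * r ^ ν) ^ (p / (p-1+ν))) ^ (1/p) :=
        Real.rpow_le_rpow hD0 hD (by positivity)
      rw [← Real.rpow_mul hbr] at h3
      have he : p / (p-1+ν) * (1/p) = 1/(p-1+ν) := by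
        field_simp
      rw [he] at h3
      calc ‖x₀-xdag‖ ≤ γ * (bregman ΘF ξdag x₀ xdag) ^ (1/p) :=
            hpconv x₀ xdag ξdag hξdag
        _ ≤ _ := by gcongr
    have h4 : r ≤ α₀ ^ (1/p) * (β * r ^ ν) ^ (1/(p-1+ν)) := by
      calc r ≤ ‖T‖ * ‖x₀ - xdag‖ := T.le_opNorm _
        _ ≤ (α₀ ^ (1/p) / γ) * (γ * (β * r^ν) ^ (1/(p-1+ν))) := by
            apply mul_le_mul hT h1 (norm_nonneg _) (by positivity)
        _ = α₀ ^ (1/p) * (β * r^ν) ^ (1/(p-1+ν)) := by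
            field_simp
    have h5 : r ^ (p-1+ν) ≤ α₀ ^ ((p-1+ν)/p) * (β * r^ν) := by
      have h6 := Real.rpow_le_rpow hr0 h4 hq.le
      rw [Real.mul_rpow (by positivity) (by positivity),
        ← Real.rpow_mul hα₀.le, ← Real.rpow_mul hbr] at h6
      have e1 : 1/p * (p-1+ν) = (p-1+ν)/p := by ring
      have e2 : 1/(p-1+ν) * (p-1+ν) = 1 := by field_simp
      rwa [e1, e2, Real.rpow_one] at h6
    have h7 : r ^ (p-1) ≤ β * α₀ ^ ((p-1+ν)/p) := by
      have hrν : (0:ℝ) < r ^ ν := Real.rpow_pos_of_pos h0 ν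
      have hsplit : r ^ (p-1+ν) = r ^ (p-1) * r ^ ν := by
        rw [← Real.rpow_add h0]
      rw [hsplit] at h5
      rw [show α₀ ^ ((p-1+ν)/p) * (β * r ^ ν)
          = (β * α₀ ^ ((p-1+ν)/p)) * r ^ ν by ring] at h5
      exact le_of_mul_le_mul_right h5 hrν
    calc r = (r ^ (p-1)) ^ (1/(p-1)) := by
          rw [← Real.rpow_mul hr0, mul_one_div, div_self hp1.ne', Real.rpow_one]
      _ ≤ (β * α₀ ^ ((p-1+ν)/p)) ^ (1/(p-1)) :=
          Real.rpow_le_rpow (by positivity) h7 (by positivity)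
end
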